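/- arXiv:1511.07629 — 7 statements merged into one kernel-verified Lean document; each statement's English description precedes it below -/
import Mathlib

section
/- For quaternions q and p, p belongs to the set [q] = {Re q + i·|Im q| : i ∈ 𝕊} if and only if there exists a nonzero quaternion r such that p = r⁻¹ q r. -/
/-!
Both conditions say exactly that `p.re = q.re` and `‖p.im‖ = ‖q.im‖`. Conjugation preserves the
real part (as `(ab).re = (ba).re`) and the norm, hence also `‖im‖`. Conversely, pure quaternions
`u`, `v` of equal norm satisfy `u² = v² = -‖u‖²`, so `u (u + v) = u² + uv = (u + v) v`; when
`u + v = 0` any nonzero pure quaternion orthogonal to `u` anticommutes with it and does the job.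
-/

open scoped Quaternion

namespace Quaternion

variable {u v w : ℍ[ℝ]}

theorem re_mul_comm (a b : ℍ[ℝ]) : (a * b).re = (b * a).re := by
  simp only [re_mul]; ring

theorem im_eq_self_of_re_eq_zero (hu : u.re = 0) : u.im = u := by
  simpa [hu] using u.re_add_im

theorem sq_of_re_eq_zero (hu : u.re = 0) : u ^ 2 = -((‖u‖ ^ 2 : ℝ) : ℍ[ℝ]) := by
  rw [sq_eq_neg_normSq.mpr hu, normSq_eq_norm_mul_self, sq]

theorem sq_eq_neg_one_iff_norm_eq_one (hu : u.re = 0) : u ^ 2 = -1 ↔ ‖u‖ = 1 := by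
  rw [sq_of_re_eq_zero hu, neg_inj, ← coe_one, coe_inj,
    pow_eq_one_iff_of_nonneg (norm_nonneg u) two_ne_zero]

theorem mul_eq_neg_mul_of_inner_eq_zero (hu : u.re = 0) (hw : w.re = 0) (h : inner ℝ u w = 0) :
    u * w = -(w * u) := by
  rw [inner_def] at h
  ext <;> simp only [re_mul, imI_mul, imJ_mul, imK_mul, re_neg, imI_neg, imJ_neg, imK_neg, re_star,
    imI_star, imJ_star, imK_star, hu, hw] at h ⊢ <;> linarith

theorem exists_ne_zero_mul_eq_mul_neg (hu : u.re = 0) : ∃ w ≠ 0, u * w = w * -u := by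
  suffices ∃ w ≠ 0, w.re = 0 ∧ inner ℝ u w = 0 by
    obtain ⟨w, hw0, hw, h⟩ := this
    exact ⟨w, hw0, by rw [mul_eq_neg_mul_of_inner_eq_zero hu hw h, mul_neg]⟩
  by_cases hI : u.imI = 0
  · refine ⟨Complex.I, fun h => by simpa using congrArg QuaternionAlgebra.imI h, rfl, ?_⟩
    simp [inner_def, hI]
  · obtain ⟨w, hw⟩ : ∃ w : ℍ[ℝ], w.re = 0 ∧ w.imI = u.imJ ∧ w.imJ = -u.imI ∧ w.imK = 0 :=
      ⟨⟨0, u.imJ, -u.imI, 0⟩, rfl, rfl, rfl, rfl⟩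
    refine ⟨w, fun h => hI (by simpa [h] using hw.2.2.1), hw.1, ?_⟩
    simp only [inner_def, re_mul, re_star, imI_star, imJ_star, imK_star, hu, hw]
    ring

theorem exists_ne_zero_mul_eq_mul_of_norm_eq (hu : u.re = 0) (hv : v.re = 0) (h : ‖u‖ = ‖v‖) :
    ∃ r ≠ 0, u * r = r * v := by
  by_cases huv : u + v = 0
  · rw [← neg_eq_of_add_eq_zero_right huv]
    exact exists_ne_zero_mul_eq_mul_neg hu
  · refine ⟨u + v, huv, ?_⟩
    have hsq : u * u = v * v := by rw [← sq, ← sq, sq_of_re_eq_zero hu, sq_of_re_eq_zero hv, h]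
    rw [mul_add, add_mul, hsq, add_comm]

theorem exists_unit_smul_of_re_eq_zero (hu : u.re = 0) :
    ∃ i : ℍ[ℝ], i.re = 0 ∧ ‖i‖ = 1 ∧ u = ‖u‖ • i := by
  by_cases h0 : u = 0
  · subst h0
    refine ⟨Complex.I, rfl, ?_, by simp⟩
    rw [← sq_eq_neg_one_iff_norm_eq_one rfl, sq, ← coeComplex_mul, Complex.I_mul_I]
    ext <;> simp
  · refine ⟨‖u‖⁻¹ • u, by simp [hu], ?_, ?_⟩
    · rw [norm_smul, norm_inv, norm_norm, inv_mul_cancel₀ (norm_ne_zero_iff.mpr h0)]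
    · rw [smul_smul, mul_inv_cancel₀ (norm_ne_zero_iff.mpr h0), one_smul]

theorem norm_im_sq (a : ℍ[ℝ]) : ‖a.im‖ ^ 2 = ‖a‖ ^ 2 - a.re ^ 2 := by
  simp only [sq, ← normSq_eq_norm_mul_self, normSq_def']
  simp only [re_im, imI_im, imJ_im, imK_im]
  ring

theorem norm_im_eq_of_re_eq_of_norm_eq (hre : u.re = v.re) (hn : ‖u‖ = ‖v‖) :
    ‖u.im‖ = ‖v.im‖ := by
  rw [← sq_eq_sq₀ (norm_nonneg _) (norm_nonneg _), norm_im_sq, norm_im_sq, hre, hn]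

theorem exists_imaginary_unit_eq_re_add_mul_iff (q p : ℍ[ℝ]) :
    (∃ i : ℍ[ℝ], i.re = 0 ∧ i ^ 2 = -1 ∧ p = q.re + i * ‖q.im‖) ↔
      p.re = q.re ∧ ‖p.im‖ = ‖q.im‖ := by
  constructor
  · rintro ⟨i, hi, hi2, rfl⟩
    have hi1 := (sq_eq_neg_one_iff_norm_eq_one hi).mp hi2
    rw [mul_coe_eq_smul]
    constructor
    · simp [hi]
    · simp [im_eq_self_of_re_eq_zero hi, norm_smul, hi1]
  · rintro ⟨hre, him⟩
    obtain ⟨i, hi, hi1, hpi⟩ := exists_unit_smul_of_re_eq_zero p.re_im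
    refine ⟨i, hi, (sq_eq_neg_one_iff_norm_eq_one hi).mpr hi1, ?_⟩
    rw [mul_coe_eq_smul, ← him, ← hpi, ← hre, re_add_im]

theorem exists_conj_eq_iff (q p : ℍ[ℝ]) :
    (∃ r : ℍ[ℝ], r ≠ 0 ∧ p = r⁻¹ * q * r) ↔ p.re = q.re ∧ ‖p.im‖ = ‖q.im‖ := by
  constructor
  · rintro ⟨r, hr, rfl⟩
    have hre : (r⁻¹ * q * r).re = q.re := by
      rw [mul_assoc, re_mul_comm, mul_assoc, mul_inv_cancel₀ hr, mul_one]
    have hnorm : ‖r⁻¹ * q * r‖ = ‖q‖ := by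
      rw [norm_mul, norm_mul, norm_inv]
      field_simp [norm_ne_zero_iff.mpr hr]
    exact ⟨hre, norm_im_eq_of_re_eq_of_norm_eq hre hnorm⟩
  · rintro ⟨hre, him⟩
    obtain ⟨r, hr, hqr⟩ := exists_ne_zero_mul_eq_mul_of_norm_eq q.re_im p.re_im him.symm
    have hcomm : q * r = r * p := by
      rw [← q.re_add_im, ← p.re_add_im, add_mul, mul_add, hqr, hre, coe_commutes]
    exact ⟨r, hr, by rw [mul_assoc, hcomm, ← mul_assoc, inv_mul_cancel₀ hr, one_mul]⟩

end Quaternion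

theorem mem_sphere_iff_conjugate (q p : ℍ[ℝ]) :
    (∃ i : ℍ[ℝ], i.re = 0 ∧ i ^ 2 = -1 ∧
        p = ((q.re : ℝ) : ℍ[ℝ]) + i * ((‖q.im‖ : ℝ) : ℍ[ℝ]))
      ↔ ∃ r : ℍ[ℝ], r ≠ 0 ∧ p = r⁻¹ * q * r :=
  (Quaternion.exists_imaginary_unit_eq_re_add_mul_iff q p).trans
    (Quaternion.exists_conj_eq_iff q p).symm
end

section
/- For quaternions q, s with q not in the conjugacy sphere of s (equivalently q² - 2·Re(s)·q + |s|² ≠ 0), the quaternion S := -(q² - 2·Re(s)·q + |s|²)⁻¹ · (q - conj(s)) satisfies the left Cauchy kernel equation S·s - q·S = 1 (i.e. S is the value of the left slice hyperholomorphic Cauchy kernel). -/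
open scoped Quaternion

theorem left_cauchy_kernel_equation (q s : ℍ[ℝ])
    (h : q ^ 2 - 2 * (s.re : ℍ[ℝ]) * q + ((‖s‖ ^ 2 : ℝ) : ℍ[ℝ]) ≠ 0) :
    (-(q ^ 2 - 2 * (s.re : ℍ[ℝ]) * q + ((‖s‖ ^ 2 : ℝ) : ℍ[ℝ]))⁻¹ * (q - star s)) * s
      - q * (-(q ^ 2 - 2 * (s.re : ℍ[ℝ]) * q + ((‖s‖ ^ 2 : ℝ) : ℍ[ℝ]))⁻¹ * (q - star s))
      = 1 := by
  set P : ℍ[ℝ] := q ^ 2 - 2 * (s.re : ℍ[ℝ]) * q + ((‖s‖ ^ 2 : ℝ) : ℍ[ℝ]) with hP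
  have c1 : Commute q ((s.re : ℝ) : ℍ[ℝ]) := (Quaternion.coe_commutes _ _).symm
  have c2 : Commute q ((‖s‖ ^ 2 : ℝ) : ℍ[ℝ]) := (Quaternion.coe_commutes _ _).symm
  have c3 : Commute q (2 * (s.re : ℍ[ℝ]) * q) :=
    ((Commute.ofNat_right q 2).mul_right c1).mul_right (Commute.refl q)
  have hcomm : Commute q P := by
    rw [hP]
    exact (((Commute.refl q).pow_right 2).sub_right c3).add_right c2
  have hinv : Commute q P⁻¹ := hcomm.inv_right₀
  have key : (q - star s) * s - q * (q - star s) = -P := by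
    have h1 : star s * s = ((Quaternion.normSq s : ℝ) : ℍ[ℝ]) := Quaternion.star_mul_self s
    have h2 : s + star s = 2 * (s.re : ℍ[ℝ]) := Quaternion.self_add_star s
    have h3 : ((‖s‖ ^ 2 : ℝ) : ℍ[ℝ]) = ((Quaternion.normSq s : ℝ) : ℍ[ℝ]) := by
      rw [Quaternion.normSq_eq_norm_mul_self, sq]
    have expand : (q - star s) * s - q * (q - star s)
        = q * (s + star s) - star s * s - q ^ 2 := by noncomm_ring
    have hq2 : q * (2 * (s.re : ℍ[ℝ])) = 2 * (s.re : ℍ[ℝ]) * q :=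
      ((Commute.ofNat_right q 2).mul_right c1).eq
    rw [expand, h1, h2, hq2, hP, h3]
    noncomm_ring
  calc (-P⁻¹ * (q - star s)) * s - q * (-P⁻¹ * (q - star s))
      = -P⁻¹ * ((q - star s) * s) - (q * P⁻¹) * -(q - star s) := by noncomm_ring
    _ = -P⁻¹ * ((q - star s) * s) - (P⁻¹ * q) * -(q - star s) := by rw [hinv.eq]
    _ = -P⁻¹ * ((q - star s) * s - q * (q - star s)) := by noncomm_ring
    _ = -P⁻¹ * -P := by rw [key]
    _ = 1 := by rw [neg_mul_neg, inv_mul_cancel₀ h]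
end

section
/- For quaternions q, s with q² - 2·Re(s)·q + |s|² ≠ 0, the right Cauchy kernel S := -(q - conj(s)) · (q² - 2·Re(s)·q + |s|²)⁻¹ satisfies s·S - S·q = 1. -/
open scoped Quaternion

theorem right_cauchy_kernel_equation (q s : ℍ[ℝ])
    (h : q ^ 2 - 2 * (s.re : ℍ[ℝ]) * q + ((‖s‖ ^ 2 : ℝ) : ℍ[ℝ]) ≠ 0) :
    s * (-(q - star s) * (q ^ 2 - 2 * (s.re : ℍ[ℝ]) * q + ((‖s‖ ^ 2 : ℝ) : ℍ[ℝ]))⁻¹)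
      - (-(q - star s) * (q ^ 2 - 2 * (s.re : ℍ[ℝ]) * q + ((‖s‖ ^ 2 : ℝ) : ℍ[ℝ]))⁻¹) * q
      = 1 := by
  set P : ℍ[ℝ] := q ^ 2 - 2 * (s.re : ℍ[ℝ]) * q + ((‖s‖ ^ 2 : ℝ) : ℍ[ℝ]) with hP
  have hc : Commute q P := by
    have h1 : Commute q (((2 * s.re : ℝ)) : ℍ[ℝ]) := (Quaternion.coe_commute _ q).symm
    have he : 2 * (s.re : ℍ[ℝ]) = (((2 * s.re : ℝ)) : ℍ[ℝ]) := by push_cast [show ((2:ℝ):ℍ[ℝ]) = 2 by rw [show (2:ℝ)=1+1 by norm_num, Quaternion.coe_add, Quaternion.coe_one]; norm_num]; ring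
    have h2 : Commute q (((‖s‖ ^ 2 : ℝ) : ℍ[ℝ])) := (Quaternion.coe_commute _ q).symm
    rw [hP, he]
    exact ((Commute.pow_right (Commute.refl q) 2).sub_right
      (h1.mul_right (Commute.refl q))).add_right h2
  have hq : P⁻¹ * q = q * P⁻¹ := (hc.inv_right₀).symm.eq
  have key : s * (-(q - star s)) - (-(q - star s)) * q = P := by
    have hs : s * star s = ((‖s‖ ^ 2 : ℝ) : ℍ[ℝ]) := by
      rw [Quaternion.self_mul_star]
      norm_cast
      rw [Quaternion.normSq_eq_norm_mul_self, sq]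
    have hadd : s + star s = 2 * (s.re : ℍ[ℝ]) := by
      rw [Quaternion.self_add_star']
      push_cast [show ((2:ℝ):ℍ[ℝ]) = 2 by rw [show (2:ℝ)=1+1 by norm_num, Quaternion.coe_add, Quaternion.coe_one]; norm_num]
      ring
    have : s * (-(q - star s)) - (-(q - star s)) * q
        = q ^ 2 - (s + star s) * q + s * star s := by noncomm_ring
    rw [this, hadd, hs, hP]
  calc s * (-(q - star s) * P⁻¹) - (-(q - star s) * P⁻¹) * q
      = (s * (-(q - star s)) - (-(q - star s)) * q) * P⁻¹ := by
        rw [mul_assoc, hq]; noncomm_ring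
    _ = P * P⁻¹ := by rw [key]
    _ = 1 := mul_inv_cancel₀ h
end

section
/- Let s be a quaternion with |q| < |s| for a quaternion q. Then the series ∑_{n=0}^∞ qⁿ s^{-1-n} converges and its sum equals -(q² - 2·Re(s)·q + |s|²)⁻¹ · (q - conj(s)). -/
open scoped Quaternion

/-!
Shifting the index by one shows that the sum `S` of the series satisfies `S s = 1 + q S`.
Since `s + conj s = 2 Re s` and `s conj s = |s|²` are real, hence central, multiplying out gives
`(q² - 2 Re(s) q + |s|²) S = conj s - q`. The right side is nonzero because `|q| < |s| = |conj s|`,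
so the quadratic factor is invertible and can be moved to the other side.
-/

section NormedDivisionRing

variable {𝕜 : Type*} [NormedDivisionRing 𝕜] [CompleteSpace 𝕜] {q s : 𝕜}

theorem summable_pow_mul_inv_pow_succ (h : ‖q‖ < ‖s‖) :
    Summable fun n : ℕ => q ^ n * s⁻¹ ^ (n + 1) := by
  have hs : 0 < ‖s‖ := (norm_nonneg q).trans_lt h
  have hratio : ‖q‖ * ‖s⁻¹‖ < 1 := by
    rwa [norm_inv, ← div_eq_mul_inv, div_lt_one hs]
  refine Summable.of_norm_bounded
    ((summable_geometric_of_lt_one (by positivity) hratio).mul_left ‖s⁻¹‖) fun n => ?_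
  rw [norm_mul, norm_pow, norm_pow, mul_pow, pow_succ]
  exact le_of_eq (by ring)

theorem tsum_pow_mul_inv_pow_succ_mul (h : ‖q‖ < ‖s‖) :
    (∑' n : ℕ, q ^ n * s⁻¹ ^ (n + 1)) * s = 1 + q * ∑' n : ℕ, q ^ n * s⁻¹ ^ (n + 1) := by
  have hs : s ≠ 0 := norm_pos_iff.mp ((norm_nonneg q).trans_lt h)
  have hsummable := summable_pow_mul_inv_pow_succ h
  have hterm : ∀ n : ℕ, q ^ n * s⁻¹ ^ (n + 1) * s = q ^ n * s⁻¹ ^ n := fun n => by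
    rw [pow_succ, ← mul_assoc, mul_assoc _ s⁻¹, inv_mul_cancel₀ hs, mul_one]
  have hsummable' : Summable fun n : ℕ => q ^ n * s⁻¹ ^ n := by
    simpa only [hterm] using hsummable.mul_right s
  rw [← hsummable.tsum_mul_right, ← hsummable.tsum_mul_left]
  simp only [hterm]
  rw [hsummable'.tsum_eq_zero_add]
  simp only [pow_zero, mul_one, pow_succ' q, mul_assoc]

end NormedDivisionRing

theorem Quaternion.sq_sub_two_re_mul_add_normSq_mul_of_mul_eq {R : Type*} [CommRing R]
    {q s S : ℍ[R]} (hS : S * s = 1 + q * S) :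
    (q ^ 2 - 2 * (s.re : ℍ[R]) * q + ((normSq s : R) : ℍ[R])) * S = star s - q := by
  have hre : 2 * (s.re : ℍ[R]) * q * S = q * S * (s + star s) := by
    have hcomm : Commute (2 * (s.re : ℍ[R])) (q * S) :=
      (Commute.ofNat_left 2 (q * S)).mul_left (coe_commute s.re (q * S))
    rw [self_add_star, mul_assoc, hcomm.eq]
  have hnormSq : ((normSq s : R) : ℍ[R]) * S = S * (s * star s) := by
    rw [self_mul_star, coe_commutes]
  calc (q ^ 2 - 2 * (s.re : ℍ[R]) * q + ((normSq s : R) : ℍ[R])) * S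
      = q ^ 2 * S - q * S * (s + star s) + S * (s * star s) := by
        rw [← hre, ← hnormSq]; noncomm_ring
    _ = star s - q + ((S * s - (1 + q * S)) * star s - q * (S * s - (1 + q * S))) := by
        noncomm_ring
    _ = star s - q := by rw [hS, sub_self]; noncomm_ring

theorem cauchy_kernel_series (q s : ℍ[ℝ]) (h : ‖q‖ < ‖s‖) :
    HasSum (fun n : ℕ => q ^ n * (s⁻¹) ^ (n + 1))
      (-(q ^ 2 - 2 * (s.re : ℍ[ℝ]) * q + ((‖s‖ ^ 2 : ℝ) : ℍ[ℝ]))⁻¹ * (q - star s)) := by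
  rw [sq ‖s‖, ← Quaternion.normSq_eq_norm_mul_self]
  set P := q ^ 2 - 2 * (s.re : ℍ[ℝ]) * q + ((Quaternion.normSq s : ℝ) : ℍ[ℝ])
  set S := ∑' n : ℕ, q ^ n * s⁻¹ ^ (n + 1)
  have hPS : P * S = star s - q :=
    Quaternion.sq_sub_two_re_mul_add_normSq_mul_of_mul_eq (tsum_pow_mul_inv_pow_succ_mul h)
  have hne : star s - q ≠ 0 := sub_ne_zero.mpr fun hq => by
    rw [← hq, Quaternion.norm_star] at h
    exact h.false
  have hP : P ≠ 0 := left_ne_zero_of_mul (hPS ▸ hne)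
  rw [neg_mul, ← mul_neg, neg_sub, ← hPS, inv_mul_cancel_left₀ hP]
  exact (summable_pow_mul_inv_pow_succ h).hasSum
end

section
/- Let T be a bounded right-linear operator on a quaternionic Banach space and let s be a quaternion with ‖T‖ < |s|. Then the operator T² - 2·Re(s)·T + |s|²·I is invertible; in particular the S-spectrum σ_S(T) = {s ∈ ℍ : T² - 2Re(s)T + |s|²I not invertible} is contained in the closed ball of radius ‖T‖. -/
open scoped Quaternion
open Filter Topology ComplexConjugate

/-!
On the complexification `V × V` of `V`, where `i` acts as `(x, y) ↦ (-y, x)`, the operator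
`T² - 2 Re(s) T + |s|²` factors as `(T - z)(T - z̄)` with `z = Re s + i √(|s|² - Re(s)²)`, so
`|z| = |s| > ‖T‖`. Each factor is invertible by a Neumann series, and invertibility of the
diagonal operator `q(T) × q(T)` descends to `q(T)`.
-/

theorem isUnit_one_sub_of_norm_pow_lt_one {R : Type*} [NormedRing R] [CompleteSpace R]
    (a : R) (n : ℕ) (h : ‖a ^ n‖ < 1) : IsUnit (1 - a) := by
  have hcomm : Commute (1 - a) (∑ i ∈ Finset.range n, a ^ i) :=
    (mul_neg_geom_sum a n).trans (geom_sum_mul_neg a n).symm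
  refine (hcomm.isUnit_mul_iff.mp ?_).1
  rw [mul_neg_geom_sum]
  exact (Units.oneSub _ h).isUnit

namespace Complex

variable {A : Type*} [NormedRing A] [NormedAlgebra ℝ A] {j : A} (hj : j * j = -1)

theorem norm_liftAux_le (z : ℂ) : ‖liftAux j hj z‖ ≤ (‖(1 : A)‖ + ‖j‖) * ‖z‖ := by
  rw [liftAux_apply, Algebra.algebraMap_eq_smul_one, add_mul]
  refine (norm_add_le _ _).trans (add_le_add ?_ ?_) <;>
    refine (norm_smul_le _ _).trans ?_ <;> rw [mul_comm] <;> gcongr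
  · exact abs_re_le_norm z
  · exact abs_im_le_norm z

theorem commute_liftAux {a : A} (ha : Commute j a) (z : ℂ) : Commute (liftAux j hj z) a := by
  rw [liftAux_apply]
  exact (Algebra.commute_algebraMap_left _ _).add_left (ha.smul_left _)

theorem liftAux_ofReal (x : ℝ) : liftAux j hj x = x • 1 := by
  rw [← Algebra.algebraMap_eq_smul_one, ← AlgHom.commutes (liftAux j hj)]
  rfl

theorem isUnit_sub_liftAux [CompleteSpace A] {a : A} (ha : Commute j a) {z : ℂ}
    (hz : ‖a‖ < ‖z‖) : IsUnit (a - liftAux j hj z) := by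
  set φ := liftAux j hj
  have hz0 : z ≠ 0 := norm_pos_iff.mp ((norm_nonneg a).trans_lt hz)
  -- `φ` need not be isometric, so `‖φ z⁻¹ * a‖` may exceed `1`; only its powers are controlled.
  have hfactor : a - φ z = -(φ z * (1 - φ z⁻¹ * a)) := by
    rw [mul_sub, mul_one, ← mul_assoc, ← map_mul, mul_inv_cancel₀ hz0, map_one, one_mul, neg_sub]
  have hlim : Tendsto (fun n : ℕ ↦ (‖(1 : A)‖ + ‖j‖) * (‖a‖ / ‖z‖) ^ n) atTop (𝓝 0) := by
    have hq : ‖a‖ / ‖z‖ < 1 := (div_lt_one ((norm_nonneg a).trans_lt hz)).mpr hz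
    simpa using (tendsto_pow_atTop_nhds_zero_of_lt_one (by positivity) hq).const_mul
      (‖(1 : A)‖ + ‖j‖)
  obtain ⟨n, hn, hn0⟩ :=
    ((hlim.eventually (gt_mem_nhds one_pos)).and (eventually_gt_atTop 0)).exists
  have hpow : ‖(φ z⁻¹ * a) ^ n‖ < 1 := calc
    ‖(φ z⁻¹ * a) ^ n‖ = ‖φ (z⁻¹ ^ n) * a ^ n‖ := by rw [(commute_liftAux hj ha _).mul_pow, map_pow]
    _ ≤ (‖(1 : A)‖ + ‖j‖) * ‖z⁻¹ ^ n‖ * ‖a‖ ^ n :=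
      (norm_mul_le _ _).trans (mul_le_mul (norm_liftAux_le hj _) (norm_pow_le' a hn0)
        (norm_nonneg _) (by positivity))
    _ = (‖(1 : A)‖ + ‖j‖) * (‖a‖ / ‖z‖) ^ n := by
      rw [norm_pow, norm_inv, div_pow, inv_pow]; ring
    _ < 1 := hn
  rw [hfactor]
  exact ((Ne.isUnit hz0).map φ |>.mul (isUnit_one_sub_of_norm_pow_lt_one _ n hpow)).neg

theorem sub_liftAux_mul_sub_liftAux_conj {a : A} (ha : Commute j a) (z : ℂ) :
    (a - liftAux j hj z) * (a - liftAux j hj (conj z)) =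
      a * a - (2 * z.re) • a + (‖z‖ ^ 2) • 1 := by
  have hsum : liftAux j hj z + liftAux j hj (conj z) = (2 * z.re) • 1 := by
    rw [← map_add, add_conj, liftAux_ofReal]
  have hprod : liftAux j hj z * liftAux j hj (conj z) = (‖z‖ ^ 2) • 1 := by
    rw [← map_mul, mul_conj, normSq_eq_norm_sq, liftAux_ofReal]
  rw [← hprod, ← smul_one_mul, ← hsum, sub_mul, mul_sub, mul_sub,
    ← (commute_liftAux hj ha _).eq, add_mul]
  abel

end Complex

theorem isUnit_quadratic_of_norm_lt {A : Type*} [NormedRing A] [NormedAlgebra ℝ A]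
    [CompleteSpace A] {j : A} (hj : j * j = -1) {a : A} (hja : Commute j a) {r ρ : ℝ}
    (ha : ‖a‖ < ρ) (hr : |r| ≤ ρ) : IsUnit (a * a - (2 * r) • a + (ρ ^ 2) • 1) := by
  set z : ℂ := ⟨r, √(ρ ^ 2 - r ^ 2)⟩
  have hz : ‖z‖ = ρ := by
    have hρ : 0 ≤ ρ := (abs_nonneg r).trans hr
    rw [Complex.norm_def, Complex.normSq_mk, ← sq, ← sq, Real.sq_sqrt, add_sub_cancel,
      Real.sqrt_sq hρ]
    nlinarith [sq_abs r, abs_nonneg r]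
  have hunit := (Complex.isUnit_sub_liftAux hj hja (z := z) (hz ▸ ha)).mul
    (Complex.isUnit_sub_liftAux hj hja (z := conj z) (by rwa [Complex.norm_conj, hz]))
  rwa [Complex.sub_liftAux_mul_sub_liftAux_conj hj hja, hz] at hunit

namespace ContinuousLinearMap

variable {R V : Type*} [Ring R] [TopologicalSpace V] [AddCommGroup V] [Module R V]
  [IsTopologicalAddGroup V]

variable (R V) in
/-- Multiplication by `i` on `V × V`, viewed as the complexification of `V`. -/
noncomputable def prodRotation : V × V →L[R] V × V :=
  (-(snd R V V)).prod (fst R V V)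

theorem prodRotation_mul_self : prodRotation R V * prodRotation R V = -1 := by
  ext v <;> simp [prodRotation]

theorem commute_prodRotation_prodMap (f : V →L[R] V) :
    Commute (prodRotation R V) (f.prodMap f) := by
  ext v <;> simp [prodRotation]

theorem isUnit_of_isUnit_prodMap {f : V →L[R] V} (h : IsUnit (f.prodMap f)) : IsUnit f := by
  obtain ⟨g, hg⟩ := h
  refine isUnit_iff_exists.mpr ⟨fst R V V ∘L g⁻¹.val ∘L inl R V V, ?_, ?_⟩ <;> ext x
  · have hx : f.prodMap f (g⁻¹.val (x, 0)) = (x, 0) := by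
      rw [← hg]; exact DFunLike.congr_fun g.mul_inv (x, 0)
    exact congr_arg Prod.fst hx
  · have hx : g⁻¹.val (f.prodMap f (x, 0)) = (x, 0) := by
      rw [← hg]; exact DFunLike.congr_fun g.inv_mul (x, 0)
    simpa using congr_arg Prod.fst hx

theorem norm_prodMap_le {𝕜 E F G H : Type*} [NontriviallyNormedField 𝕜]
    [SeminormedAddCommGroup E] [SeminormedAddCommGroup F] [SeminormedAddCommGroup G]
    [SeminormedAddCommGroup H] [NormedSpace 𝕜 E] [NormedSpace 𝕜 F] [NormedSpace 𝕜 G]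
    [NormedSpace 𝕜 H] (f : E →L[𝕜] F) (g : G →L[𝕜] H) : ‖f.prodMap g‖ ≤ max ‖f‖ ‖g‖ := by
  refine opNorm_le_bound _ (by positivity) fun x => max_le ?_ ?_
  · calc ‖f x.1‖ ≤ ‖f‖ * ‖x.1‖ := f.le_opNorm x.1
      _ ≤ max ‖f‖ ‖g‖ * ‖x‖ := by gcongr; exacts [le_max_left _ _, _root_.norm_fst_le x]
  · calc ‖g x.2‖ ≤ ‖g‖ * ‖x.2‖ := g.le_opNorm x.2
      _ ≤ max ‖f‖ ‖g‖ * ‖x‖ := by gcongr; exacts [le_max_right _ _, _root_.norm_snd_le x]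

end ContinuousLinearMap

theorem Quaternion.abs_re_le_norm (s : ℍ[ℝ]) : |s.re| ≤ ‖s‖ := by
  simpa [Quaternion.inner_def] using abs_real_inner_le_norm s 1

theorem sSpectrum_subset_closedBall_general {V : Type*} [NormedAddCommGroup V] [NormedSpace ℝ V]
    [CompleteSpace V]
    (T : V →L[ℝ] V) :
    (∀ s : ℍ[ℝ], ‖T‖ < ‖s‖ →
        IsUnit (T * T - (2 * s.re) • T + (‖s‖ ^ 2) • (1 : V →L[ℝ] V))) ∧
    {s : ℍ[ℝ] | ¬ IsUnit (T * T - (2 * s.re) • T + (‖s‖ ^ 2) • (1 : V →L[ℝ] V))}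
      ⊆ Metric.closedBall 0 ‖T‖ := by
  have hunit (s : ℍ[ℝ]) (hs : ‖T‖ < ‖s‖) :
      IsUnit (T * T - (2 * s.re) • T + (‖s‖ ^ 2) • (1 : V →L[ℝ] V)) := by
    refine ContinuousLinearMap.isUnit_of_isUnit_prodMap ?_
    have hL : ‖T.prodMap T‖ < ‖s‖ := (T.norm_prodMap_le T).trans_lt (by rwa [max_self])
    convert isUnit_quadratic_of_norm_lt ContinuousLinearMap.prodRotation_mul_self
      (T.commute_prodRotation_prodMap) hL (Quaternion.abs_re_le_norm s) using 1
    ext v <;> simp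
  refine ⟨hunit, fun s hs => ?_⟩
  rw [Metric.mem_closedBall, dist_zero_right]
  exact le_of_not_gt fun h => hs (hunit s h)

theorem sSpectrum_subset_closedBall {V : Type*} [NormedAddCommGroup V] [NormedSpace ℝ V]
    [CompleteSpace V] [Module ℍ[ℝ]ᵐᵒᵖ V]
    (T : V →L[ℝ] V)
    (hT : ∀ (a : ℍ[ℝ]) (v : V), T (MulOpposite.op a • v) = MulOpposite.op a • T v) :
    (∀ s : ℍ[ℝ], ‖T‖ < ‖s‖ →
        IsUnit (T * T - (2 * s.re) • T + (‖s‖ ^ 2) • (1 : V →L[ℝ] V))) ∧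
    {s : ℍ[ℝ] | ¬ IsUnit (T * T - (2 * s.re) • T + (‖s‖ ^ 2) • (1 : V →L[ℝ] V))}
      ⊆ Metric.closedBall 0 ‖T‖ :=
  sSpectrum_subset_closedBall_general T
end

section
/- Let T be a bounded right-linear operator on a quaternionic Banach space and s ∈ ρ_S(T). Then the left S-resolvent S_L⁻¹(s,T) := Q_s(T)·conj(s) - T·Q_s(T), with Q_s(T) = (T² - 2Re(s)T + |s|²I)⁻¹, satisfies the equation S_L⁻¹(s,T)·s - T·S_L⁻¹(s,T) = I. -/
open scoped Quaternion

theorem left_sResolvent_equation {V : Type*} [NormedAddCommGroup V] [CompleteSpace V]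
    [Module ℍ[ℝ]ᵐᵒᵖ V]
    (T Q : V → V) (s : ℍ[ℝ])
    (hTadd : ∀ v w, T (v + w) = T v + T w)
    (hT : ∀ (a : ℍ[ℝ]) (v : V), T (MulOpposite.op a • v) = MulOpposite.op a • T v)
    (hTcont : Continuous T) (hQcont : Continuous Q)
    (hQadd : ∀ v w, Q (v + w) = Q v + Q w)
    (hQT : ∀ v, Q (T v) = T (Q v))
    (hQ1 : ∀ v, T (T (Q v)) - MulOpposite.op (((2 * s.re : ℝ) : ℍ[ℝ])) • T (Q v)
        + MulOpposite.op (((‖s‖ ^ 2 : ℝ) : ℍ[ℝ])) • Q v = v)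
    (hQ2 : ∀ v, Q (T (T v) - MulOpposite.op (((2 * s.re : ℝ) : ℍ[ℝ])) • T v
        + MulOpposite.op (((‖s‖ ^ 2 : ℝ) : ℍ[ℝ])) • v) = v) :
    ∀ v : V,
      MulOpposite.op s • (MulOpposite.op (star s) • Q v - T (Q v))
        - T (MulOpposite.op (star s) • Q v - T (Q v)) = v := by
  intro v
  have hTneg : ∀ x : V, T (-x) = -T x := by
    intro x
    have := hT (-1) x
    simpa [MulOpposite.op_neg, neg_smul] using this
  have hTsub : ∀ x y : V, T (x - y) = T x - T y := by
    intro x y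
    rw [sub_eq_add_neg, hTadd, hTneg, sub_eq_add_neg]
  have h1 : MulOpposite.op s • MulOpposite.op (star s) • Q v
      = MulOpposite.op (((‖s‖ ^ 2 : ℝ) : ℍ[ℝ])) • Q v := by
    rw [smul_smul, ← MulOpposite.op_mul]
    congr 1
    rw [Quaternion.star_mul_self]
    norm_cast
    rw [Quaternion.normSq_eq_norm_mul_self]; ring
  have h2 : MulOpposite.op s • T (Q v) + MulOpposite.op (star s) • T (Q v)
      = MulOpposite.op (((2 * s.re : ℝ) : ℍ[ℝ])) • T (Q v) := by
    rw [← add_smul, ← MulOpposite.op_add]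
    congr 2
    rw [Quaternion.self_add_star']
  rw [hTsub, hT, smul_sub, h1]
  conv_rhs => rw [← hQ1 v]
  rw [← h2]
  abel
end

section
/- Let f, g be functions from an open set U ⊆ ℂ to the quaternions, written via the splitting f(z) = F(z) + G(z)·j and g(z) = H(z) + K(z)·j with F,G,H,K : U → ℂ_i ≅ ℂ and j ∈ 𝕊 orthogonal to i. If F, G, H, K are holomorphic and U is symmetric under conjugation, then the function z ↦ [F(z)H(z) - G(z)·conj(K(conj z))] + [F(z)K(z) + G(z)·conj(H(conj z))]·j has holomorphic component functions (i.e. the slice product of two left slice hyperholomorphic restrictions is again of split holomorphic form). -/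
lemma conj_comp_conj_diffOn (U : Set ℂ)
    (hsym : ∀ z ∈ U, (starRingEnd ℂ) z ∈ U)
    (K : ℂ → ℂ) (hK : DifferentiableOn ℂ K U) :
    DifferentiableOn ℂ (fun z => (starRingEnd ℂ) (K ((starRingEnd ℂ) z))) U := by
  intro z hz
  have hz' : (starRingEnd ℂ) z ∈ U := hsym z hz
  set k := derivWithin K U ((starRingEnd ℂ) z) with hkdef
  have hk : HasDerivWithinAt K k U ((starRingEnd ℂ) z) :=
    (hK _ hz').hasDerivWithinAt
  have main : HasDerivWithinAt (fun z => (starRingEnd ℂ) (K ((starRingEnd ℂ) z)))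
      ((starRingEnd ℂ) k) U z := by
    rw [hasDerivWithinAt_iff_tendsto_slope] at hk ⊢
    have hslope : ∀ y, slope (fun z => (starRingEnd ℂ) (K ((starRingEnd ℂ) z))) z y
        = (starRingEnd ℂ) (slope K ((starRingEnd ℂ) z) ((starRingEnd ℂ) y)) := by
      intro y
      simp [slope_def_field, map_div₀, map_sub]
    have hmaps : Set.MapsTo (starRingEnd ℂ) (U \ {z}) (U \ {(starRingEnd ℂ) z}) := by
      rintro w ⟨hw, hwz⟩
      refine ⟨hsym w hw, ?_⟩
      simp only [Set.mem_singleton_iff] at hwz ⊢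
      intro h
      exact hwz (by simpa using congrArg (starRingEnd ℂ) h)
    have hconj_tend : Filter.Tendsto (starRingEnd ℂ) (nhdsWithin z (U \ {z}))
        (nhdsWithin ((starRingEnd ℂ) z) (U \ {(starRingEnd ℂ) z})) :=
      ((Complex.continuous_conj.continuousAt).continuousWithinAt).tendsto_nhdsWithin hmaps
    have : Filter.Tendsto (fun y => (starRingEnd ℂ) (slope K ((starRingEnd ℂ) z) ((starRingEnd ℂ) y)))
        (nhdsWithin z (U \ {z})) (nhds ((starRingEnd ℂ) k)) :=
      (Complex.continuous_conj.continuousAt.tendsto).comp (hk.comp hconj_tend)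
    exact this.congr (fun y => (hslope y).symm)
  exact main.differentiableWithinAt

theorem slice_product_components_holomorphic (U : Set ℂ) (hU : IsOpen U)
    (hsym : ∀ z ∈ U, (starRingEnd ℂ) z ∈ U)
    (F G H K : ℂ → ℂ)
    (hF : DifferentiableOn ℂ F U) (hG : DifferentiableOn ℂ G U)
    (hH : DifferentiableOn ℂ H U) (hK : DifferentiableOn ℂ K U) :
    DifferentiableOn ℂ
        (fun z => F z * H z - G z * (starRingEnd ℂ) (K ((starRingEnd ℂ) z))) U ∧
    DifferentiableOn ℂ
        (fun z => F z * K z + G z * (starRingEnd ℂ) (H ((starRingEnd ℂ) z))) U := by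
  have hK' := conj_comp_conj_diffOn U hsym K hK
  have hH' := conj_comp_conj_diffOn U hsym H hH
  exact ⟨(hF.mul hH).sub (hG.mul hK'), (hF.mul hK).add (hG.mul hH')⟩
end
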